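/- arXiv:1406.5421 — 5 statements merged into one kernel-verified Lean document; each statement's English description precedes it below -/
import Mathlib

section
/- Let j, k ∈ S with k ≠ j, let x₀ = (u₀, j, j, v₀, k, j) be a finite string over S (u₀, v₀ possibly empty), and let 𝒞 = { x ⪯ x₀ : x = (u, j, j, v, k, j) for some (possibly empty) strings u, v }. Then 𝒞 has a minimal element x*, and x* can be taken of the form x* = (j, j, v*, k, j) with j ∉ {v*}. -/
/-!
Among the strings `(j, j, v, k, j) ⪯ x₀` pick one with `v` of least length. Since `⪯` is
transitive and every suffix of a string is shorter than it, a member `(u, j, j, w, k, j)` of `𝒞`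
strictly shorter than `(j, j, v, k, j)` would give the shorter candidate `w`. If `j` occurred in
`v = (v₁, j, v₂)`, the closed walk `(j, v₁, j)` could be moved in front of the self-loop `(j, j)`
without changing any transition count, so `v₂` would be a shorter candidate.
-/

variable {S : Type*} [DecidableEq S]

/-- The number of transitions from `i` to `j` in the finite string `z`. -/
def transCount (z : List S) (i j : S) : ℕ :=
  (z.zip z.tail).countP (fun q => decide (q = (i, j)))

/-- Two finite strings are equivalent if they have the same first element and the
same transition counts between any two states. -/
def StringEquiv (z z' : List S) : Prop :=
  z.head? = z'.head? ∧ ∀ i j : S, transCount z i j = transCount z' i j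

/-- `z ⪯ z'` : there is a (possibly empty) string `x` with `(x, z) ∼ z'`. -/
def Shorter (z z' : List S) : Prop :=
  ∃ x : List S, StringEquiv (x ++ z) z'

/-- `z ≺ z'` : there is a nonempty string `x` with `(x, z) ∼ z'`. -/
def StrictShorter (z z' : List S) : Prop :=
  ∃ x : List S, x ≠ [] ∧ StringEquiv (x ++ z) z'

/-- `z*` is minimal in the class `𝒞`. -/
def MinimalIn (𝒞 : Set (List S)) (zstar : List S) : Prop :=
  zstar ∈ 𝒞 ∧ ∀ z ∈ 𝒞, ¬ StrictShorter z zstar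

lemma transCount_eq_count (z : List S) (i j : S) :
    transCount z i j = (z.zip z.tail).count (i, j) := by
  rw [transCount, List.count_eq_countP]
  congr 1
  funext q
  rw [Bool.eq_iff_iff, beq_iff_eq, decide_eq_true_iff]

lemma transCount_cons_cons (a b : S) (z : List S) (i j : S) :
    transCount (a :: b :: z) i j =
      (if (a, b) = (i, j) then 1 else 0) + transCount (b :: z) i j := by
  simp only [transCount, List.tail_cons, List.zip_cons_cons, List.countP_cons,
    decide_eq_true_eq]
  omega

lemma transCount_singleton (a i j : S) : transCount [a] i j = 0 := rfl

lemma transCount_append_cons (x : List S) (b : S) (z : List S) (i j : S) :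
    transCount (x ++ b :: z) i j = transCount (x ++ [b]) i j + transCount (b :: z) i j := by
  induction x with
  | nil => simp [transCount_singleton]
  | cons a x ih =>
    cases x with
    | nil => simp [transCount_cons_cons, transCount_singleton]
    | cons c x =>
      simp only [List.cons_append, transCount_cons_cons] at ih ⊢
      rw [ih, add_assoc]

namespace StringEquiv

lemma refl (z : List S) : StringEquiv z z := ⟨rfl, fun _ _ => rfl⟩

lemma trans {a b c : List S} (hab : StringEquiv a b) (hbc : StringEquiv b c) :
    StringEquiv a c :=
  ⟨hab.1.trans hbc.1, fun i j => (hab.2 i j).trans (hbc.2 i j)⟩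

lemma append_left {w z : List S} (x : List S) (h : StringEquiv w z) :
    StringEquiv (x ++ w) (x ++ z) := by
  obtain ⟨hhead, hcount⟩ := h
  match w, z, hhead with
  | [], [], _ => exact refl _
  | b :: w, c :: z, hhead =>
    obtain rfl : b = c := by simpa using hhead
    refine ⟨by simp [List.head?_append], fun i j => ?_⟩
    rw [transCount_append_cons x b w, transCount_append_cons x b z, hcount]

lemma zip_tail_perm {w z : List S} (h : StringEquiv w z) :
    (w.zip w.tail).Perm (z.zip z.tail) :=
  List.perm_iff_count.2 fun p => by
    rw [← transCount_eq_count, ← transCount_eq_count]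
    exact h.2 p.1 p.2

lemma length_eq {w z : List S} (h : StringEquiv w z) : w.length = z.length := by
  have hlen := h.zip_tail_perm.length_eq
  simp only [List.length_zip, List.length_tail] at hlen
  match w, z, h.1 with
  | [], [], _ => rfl
  | _ :: _, _ :: _, _ => simp only [List.length_cons] at hlen ⊢; omega

end StringEquiv

lemma Shorter.trans {a b c : List S} (hab : Shorter a b) (hbc : Shorter b c) : Shorter a c := by
  obtain ⟨x, hx⟩ := hab
  obtain ⟨y, hy⟩ := hbc
  exact ⟨y ++ x, by rw [List.append_assoc]; exact (hx.append_left y).trans hy⟩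

lemma List.IsSuffix.shorter {t z : List S} (h : t <:+ z) : Shorter t z := by
  obtain ⟨u, rfl⟩ := h
  exact ⟨u, StringEquiv.refl _⟩

lemma StrictShorter.shorter {w z : List S} (h : StrictShorter w z) : Shorter w z :=
  let ⟨x, _, hx⟩ := h
  ⟨x, hx⟩

lemma StrictShorter.length_lt {w z : List S} (h : StrictShorter w z) : w.length < z.length := by
  obtain ⟨x, hx, heq⟩ := h
  have := heq.length_eq
  rw [List.length_append] at this
  have := List.length_pos_iff.2 hx
  omega

/-- Witness `a :: m`: moving the cycle `a m a` in front of the self-loop `a a` changes no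
transition count. -/
lemma strictShorter_cons_cons_of_cycle (a : S) (m r : List S) :
    StrictShorter (a :: a :: r) (a :: a :: (m ++ a :: r)) := by
  refine ⟨a :: m, List.cons_ne_nil _ _, by simp, fun i j => ?_⟩
  have hl := transCount_append_cons (a :: m) a (a :: r) i j
  have hr := transCount_append_cons (a :: a :: m) a r i j
  simp only [List.cons_append, transCount_cons_cons] at hl hr ⊢
  omega

theorem exists_minimal_jj_general (j k : S) (u₀ v₀ : List S) :
    ∃ vstar : List S, j ∉ vstar ∧
      MinimalIn
        {x | Shorter x (u₀ ++ [j, j] ++ v₀ ++ [k, j]) ∧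
          ∃ u v : List S, x = u ++ [j, j] ++ v ++ [k, j]}
        ([j, j] ++ vstar ++ [k, j]) := by
  set x₀ := u₀ ++ [j, j] ++ v₀ ++ [k, j]
  have hx₀ : Shorter ([j, j] ++ v₀ ++ [k, j]) x₀ :=
    List.IsSuffix.shorter ⟨u₀, by simp [x₀]⟩
  obtain ⟨v, hv, hmin⟩ := (measure List.length).wf.has_min
    {v | Shorter ([j, j] ++ v ++ [k, j]) x₀} ⟨v₀, hx₀⟩
  refine ⟨v, fun hj => ?_, ⟨hv, [], v, rfl⟩, ?_⟩
  · obtain ⟨v₁, v₂, rfl⟩ := List.append_of_mem hj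
    have hcyc := strictShorter_cons_cons_of_cycle j v₁ (v₂ ++ [k, j])
    refine hmin v₂ ?_ (show v₂.length < (v₁ ++ j :: v₂).length by simp; omega)
    simpa using hcyc.shorter.trans (by simpa using hv)
  · rintro z ⟨-, u, w, rfl⟩ hz
    have hsuffix : ([j, j] ++ w ++ [k, j]) <:+ u ++ [j, j] ++ w ++ [k, j] :=
      ⟨u, by simp⟩
    have hlt := hz.length_lt
    simp only [List.length_append] at hlt
    exact hmin w (hsuffix.shorter.trans hz.shorter |>.trans hv)
      (show w.length < v.length by omega)

theorem exists_minimal_jj (j k : S) (hkj : k ≠ j) (u₀ v₀ : List S) :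
    ∃ vstar : List S, j ∉ vstar ∧
      MinimalIn
        {x | Shorter x (u₀ ++ [j, j] ++ v₀ ++ [k, j]) ∧
          ∃ u v : List S, x = u ++ [j, j] ++ v ++ [k, j]}
        ([j, j] ++ vstar ++ [k, j]) :=
  exists_minimal_jj_general j k u₀ v₀
end

section
/- Let j, k, k' be distinct elements of S and let x = (u, k, j, v, k', j) and x' = (u', k', j, v', k, j) be finite strings over S (u, v, u', v' possibly empty) such that x ∼ x'. Then {u, k} ∩ {j, v, k'} ≠ ∅ or {u', k'} ∩ {j, v', k} ≠ ∅ (or both), where {u, k} denotes the set of elements appearing in the string (u, k), and similarly for the other sets. -/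
/-!
Let `A = {u, k}` and suppose `A` misses `{j, v, k'}`. Then every letter of `x` lying in `A` comes
before every letter outside `A`, so no transition of `x` leads from outside `A` into `A`. Strings
with the same transition counts have the same transitions, so the same holds in `x'`, where `k'`
comes before `k ∈ A`. This forces `k' ∈ A`, although `k'` lies in `{j, v, k'}`.
-/

variable {S : Type*} [DecidableEq S]

namespace List

variable {α : Type*}

theorem isChain_iff_forall_mem_zip_tail {R : α → α → Prop} :
    ∀ {l : List α}, l.IsChain R ↔ ∀ q ∈ l.zip l.tail, R q.1 q.2
  | [] | [_] => by simp
  | a :: b :: l => by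
    simp [isChain_cons_cons, isChain_iff_forall_mem_zip_tail (l := b :: l)]

theorem isChain_imp_iff_pairwise {p : α → Prop} {l : List α} :
    l.IsChain (fun a b => p b → p a) ↔ l.Pairwise (fun a b => p b → p a) :=
  haveI : Trans (fun a b => p b → p a) (fun a b => p b → p a) (fun a b => p b → p a) :=
    ⟨fun hab hbc hc => hab (hbc hc)⟩
  isChain_iff_pairwise

theorem pairwise_imp_append {p : α → Prop} {l₁ l₂ : List α}
    (h₁ : ∀ a ∈ l₁, p a) (h₂ : ∀ b ∈ l₂, ¬ p b) :
    (l₁ ++ l₂).Pairwise (fun a b => p b → p a) :=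
  pairwise_append.2
    ⟨pairwise_of_forall_mem_list fun a ha _ _ _ => h₁ a ha,
     pairwise_of_forall_mem_list fun _ _ b hb hpb => absurd hpb (h₂ b hb),
     fun a ha _ _ _ => h₁ a ha⟩

end List

theorem transCount_pos_iff {z : List S} {i j : S} :
    0 < transCount z i j ↔ (i, j) ∈ z.zip z.tail := by
  simp [transCount, List.countP_pos_iff]

theorem isChain_iff_of_transCount_eq {z z' : List S}
    (h : ∀ i j : S, transCount z i j = transCount z' i j) {R : S → S → Prop} :
    z.IsChain R ↔ z'.IsChain R := by
  have hmem : ∀ q : S × S, q ∈ z.zip z.tail ↔ q ∈ z'.zip z'.tail := fun ⟨i, j⟩ => by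
    rw [← transCount_pos_iff, ← transCount_pos_iff, h]
  simp only [List.isChain_iff_forall_mem_zip_tail, hmem]

theorem inter_nonempty_of_equiv_general (j k k' : S)
    (u v u' v' : List S)
    (h : StringEquiv (u ++ [k, j] ++ v ++ [k', j]) (u' ++ [k', j] ++ v' ++ [k, j])) :
    (∃ a : S, a ∈ u ++ [k] ∧ a ∈ j :: (v ++ [k'])) ∨
    (∃ a : S, a ∈ u' ++ [k'] ∧ a ∈ j :: (v' ++ [k])) := by
  left
  by_contra! hA
  have hx : (u ++ [k, j] ++ v ++ [k', j]).Pairwise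
      (fun a b => b ∈ u ++ [k] → a ∈ u ++ [k]) := by
    have hsplit : u ++ [k, j] ++ v ++ [k', j] = (u ++ [k]) ++ (j :: (v ++ [k', j])) := by simp
    rw [hsplit]
    refine List.pairwise_imp_append (fun _ => id) fun b hb hbA => hA b hbA ?_
    simp only [List.mem_cons, List.mem_append] at hb ⊢
    tauto
  have hx' := List.isChain_imp_iff_pairwise.1 <|
    (isChain_iff_of_transCount_eq h.2).1 (List.isChain_imp_iff_pairwise.2 hx)
  have hk'k : [k', k].Sublist (u' ++ [k', j] ++ v' ++ [k, j]) := by simp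
  have hk'A : k' ∈ u ++ [k] :=
    List.rel_of_pairwise_cons (hx'.sublist hk'k) (List.mem_singleton_self k) (by simp)
  exact hA k' hk'A (by simp)

theorem inter_nonempty_of_equiv (j k k' : S)
    (hjk : j ≠ k) (hjk' : j ≠ k') (hkk' : k ≠ k')
    (u v u' v' : List S)
    (h : StringEquiv (u ++ [k, j] ++ v ++ [k', j]) (u' ++ [k', j] ++ v' ++ [k, j])) :
    (∃ a : S, a ∈ u ++ [k] ∧ a ∈ j :: (v ++ [k'])) ∨
    (∃ a : S, a ∈ u' ++ [k'] ∧ a ∈ j :: (v' ++ [k])) :=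
  inter_nonempty_of_equiv_general j k k' u v u' v' h
end

section
/- Let X = (X_n)_{n≥0} be an S-valued process with X_0 = x0 on a probability space (Ω, 𝓕, P). If for P-almost every ω the series ∑_{n=0}^∞ P(X_{n+1} = x0 | 𝓕_n)(ω) diverges to ∞, then X is recurrent, i.e. P(X_n = x0 for infinitely many n) = 1. -/
/-!
STATEMENT 9 (first part of Theorem on recurrence): if the series of predictive
probabilities of returning to `x0` diverges almost surely, the process is recurrent.
-/

open MeasureTheory Filter

/-- The natural filtration of the process `X`: `natFiltration X n` is the
σ-algebra generated by `X_0, …, X_n`. -/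
def natFiltration {Ω S : Type*} [MeasurableSpace S] (X : ℕ → Ω → S) (n : ℕ) :
    MeasurableSpace Ω :=
  ⨆ k ≤ n, MeasurableSpace.comap (X k) inferInstance

/-- `natFiltration` bundled as a `Filtration`. -/
def natFiltration' {Ω S : Type*} [MeasurableSpace S] [m0 : MeasurableSpace Ω]
    (X : ℕ → Ω → S) (hX : ∀ n, Measurable (X n)) : Filtration ℕ m0 where
  seq := natFiltration X
  mono' := fun i j hij => by
    refine iSup₂_le fun k hk => ?_
    exact le_iSup₂ (f := fun k (_ : k ≤ j) => MeasurableSpace.comap (X k) inferInstance)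
      k (hk.trans hij)
  le' := fun n => iSup₂_le fun k _ => (hX k).comap_le

theorem recurrent_of_ae_tendsto_atTop
    {S : Type*} [Countable S] [MeasurableSpace S] [MeasurableSingletonClass S]
    {Ω : Type*} [MeasurableSpace Ω] (P : Measure Ω) [IsProbabilityMeasure P]
    (x0 : S) (X : ℕ → Ω → S)
    (hX : ∀ n, Measurable (X n)) (hX0 : ∀ ω, X 0 ω = x0)
    (h : ∀ᵐ ω ∂P, Tendsto
      (fun N => ∑ n ∈ Finset.range N,
        (P[Set.indicator {ω' | X (n + 1) ω' = x0} (fun _ => (1 : ℝ)) |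
            natFiltration X n]) ω)
      atTop atTop) :
    ∀ᵐ ω ∂P, {n : ℕ | X n ω = x0}.Infinite := by
  set s : ℕ → Set Ω := fun n => {ω | X n ω = x0} with hs
  have hsm : ∀ n, MeasurableSet[(natFiltration' X hX) n] (s n) := by
    intro n
    have h1 : MeasurableSet[MeasurableSpace.comap (X n) inferInstance] (s n) :=
      ⟨{x0}, measurableSet_singleton x0, rfl⟩
    have h2 : MeasurableSpace.comap (X n) inferInstance ≤ (natFiltration' X hX) n :=
      le_iSup₂ (f := fun k (_ : k ≤ n) => MeasurableSpace.comap (X k) inferInstance) n le_rfl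
    exact h2 _ h1
  have key := ae_mem_limsup_atTop_iff P hsm
  filter_upwards [key, h] with ω hω hω'
  have hmem : ω ∈ limsup s atTop := hω.mpr hω'
  rw [mem_limsup_iff_frequently_mem] at hmem
  exact Nat.frequently_atTop_iff_infinite.mp hmem
end

section
/- Let X = (X_n)_{n≥0} be an S-valued process with X_0 = x0, and let i, j ∈ S. If almost surely ∑_{n=1}^∞ [ P(X_{τ_n(i)+1} = j | 𝓕_{τ_n(i)}) · 1_{{τ_n(i) < ∞}} + 1_{{τ_n(i) = ∞}} ] = ∞, then P( (X_n = i for only finitely many n) ∪ (X_n = j for infinitely many n) ) = 1. -/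
/-!
STATEMENT 11 (Theorem `rec2`): if the series
`∑_n [P(X_{τ_n(i)+1} = j | 𝓕_{τ_n(i)}) 1_{τ_n(i)<∞} + 1_{τ_n(i)=∞}]` diverges
almost surely, then almost surely either `i` is visited only finitely often or
`j` is visited infinitely often.
-/

open MeasureTheory Filter
open scoped Classical

/-- The time of the `(n+1)`-st visit of the process `X` to the state `i`
(`⊤` if `i` is visited at most `n` times). -/
noncomputable def visitTime {Ω S : Type*} (X : ℕ → Ω → S) (i : S) (n : ℕ) (ω : Ω) : ℕ∞ :=
  if {t : ℕ | X t ω = i}.Infinite ∨ n < {t : ℕ | X t ω = i}.ncard then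
    ((Nat.nth (fun t => X t ω = i) n : ℕ) : ℕ∞)
  else ⊤

/-- The state visited just after the `(n+1)`-st visit to `i`; `none` (that is, the
coffin state `∂`) if `i` is visited at most `n` times. -/
noncomputable def succAtVisit {Ω S : Type*} (X : ℕ → Ω → S) (i : S) (n : ℕ) (ω : Ω) :
    Option S :=
  if visitTime X i n ω = ⊤ then none
  else some (X ((visitTime X i n ω).toNat + 1) ω)

/-- The σ-algebra `𝓕_τ` associated with the (possibly infinite) stopping time `τ`
for the filtration `ℱ`. -/
def stoppedSA {Ω : Type*} (ℱ : ℕ → MeasurableSpace Ω) (τ : Ω → ℕ∞) :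
    MeasurableSpace Ω :=
  MeasurableSpace.generateFrom
    {B | ∀ k : ℕ, MeasurableSet[ℱ k] (B ∩ {ω | τ ω ≤ (k : ℕ∞)})}

/-!
The `n`-th summand is, almost surely, the conditional probability given `𝓕_{τ_n(i)}` of the
event "`i` is visited at most `n` times, or the step after its `(n+1)`-st visit goes to `j`",
and this event is `𝓕_{τ_{n+1}(i)}`-measurable. Lévy's extension of the Borel–Cantelli lemma,
applied to the filtration `(𝓕_{τ_n(i)})_n`, shows that almost surely infinitely many of these
events occur, which means that `i` is visited finitely often or `j` infinitely often.

The σ-algebra `𝓕_τ` contains every subset of `{τ = ∞}`, so it need not be contained in the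
ambient σ-algebra. When it is not, the conditional expectations are `0` by convention, and the
divergence of the series forces `τ_n(i) = ∞` for some `n` directly.
-/

noncomputable def condProbNextAtVisit {Ω S : Type*} [MeasurableSpace S] [MeasurableSpace Ω]
    (P : Measure Ω) (X : ℕ → Ω → S) (i j : S) (n : ℕ) (ω : Ω) : ℝ :=
  if visitTime X i n ω = ⊤ then 1
  else (P[Set.indicator {ω' | succAtVisit X i n ω' = some j} (fun _ => (1 : ℝ)) |
    stoppedSA (natFiltration X) (visitTime X i n)]) ω

section Visits

variable {Ω S : Type*} {X : ℕ → Ω → S} {i : S} {n : ℕ} {ω : Ω}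

theorem visitTime_eq_ite : visitTime X i n ω =
    if ∀ hf : {t | X t ω = i}.Finite, n < hf.toFinset.card then
      (Nat.nth (fun t => X t ω = i) n : ℕ∞)
    else ⊤ := by
  rw [visitTime]
  congr 1
  refine propext ⟨?_, fun h => ?_⟩
  · rintro (hinf | hlt) hf
    · exact absurd hf hinf
    · rwa [Set.ncard_eq_toFinset_card _ hf] at hlt
  · by_cases hf : {t | X t ω = i}.Finite
    · exact Or.inr ((Set.ncard_eq_toFinset_card _ hf).symm ▸ h hf)
    · exact Or.inl hf

theorem visitTime_eq_top_iff :
    visitTime X i n ω = ⊤ ↔ ∃ hf : {t | X t ω = i}.Finite, hf.toFinset.card ≤ n := by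
  rw [visitTime_eq_ite]
  split_ifs with h
  · simpa using h
  · push Not at h
    simpa using h

theorem visitTime_le_coe_iff {k : ℕ} :
    visitTime X i n ω ≤ k ↔ n < Nat.count (fun t => X t ω = i) (k + 1) := by
  rw [visitTime_eq_ite]
  split_ifs with h
  · rw [Nat.cast_le]
    refine ⟨fun hle => ?_, fun hlt => Nat.lt_succ_iff.1 (Nat.nth_lt_of_lt_count hlt)⟩
    have := Nat.count_monotone (fun t => X t ω = i)
      (show Nat.nth (fun t => X t ω = i) n + 1 ≤ k + 1 by omega)
    rw [Nat.count_nth_succ h] at this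
    omega
  · push Not at h
    obtain ⟨hf, hcard⟩ := h
    simpa using (Nat.count_le_card hf (k + 1)).trans hcard

theorem visitTime_eq_coe_iff {t : ℕ} :
    visitTime X i n ω = t ↔ X t ω = i ∧ Nat.count (fun s => X s ω = i) t = n := by
  rw [visitTime_eq_ite]
  split_ifs with h
  · rw [Nat.cast_inj]
    constructor
    · rintro rfl
      exact ⟨Nat.nth_mem n h, Nat.count_nth h⟩
    · rintro ⟨hXt, rfl⟩
      exact Nat.nth_count hXt
  · push Not at h
    obtain ⟨hf, hcard⟩ := h
    simp only [ENat.top_ne_natCast, false_iff, not_and]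
    intro hXt hcount
    have := Nat.count_le_card hf (t + 1)
    rw [Nat.count_succ, if_pos hXt, hcount] at this
    omega

theorem visitTime_mono {m : ℕ} (hmn : m ≤ n) : visitTime X i m ≤ visitTime X i n := by
  intro ω
  cases hτ : visitTime X i n ω using ENat.recTopCoe with
  | top => exact le_top
  | coe k =>
    rw [visitTime_le_coe_iff]
    have := visitTime_le_coe_iff.1 hτ.le
    omega

theorem lt_of_visitTime_eq_of_visitTime_succ_le {t k : ℕ} (ht : visitTime X i n ω = t)
    (hk : visitTime X i (n + 1) ω ≤ k) : t < k := by
  rw [visitTime_eq_coe_iff] at ht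
  rw [visitTime_le_coe_iff] at hk
  by_contra! hkt
  have hcount : Nat.count (fun s => X s ω = i) (t + 1) = n + 1 := by
    rw [Nat.count_succ, if_pos ht.1, ht.2]
  have := Nat.count_monotone (fun s => X s ω = i) (show k + 1 ≤ t + 1 by omega)
  omega

theorem succAtVisit_eq_some_iff {j : S} : succAtVisit X i n ω = some j ↔
    visitTime X i n ω ≠ ⊤ ∧ X ((visitTime X i n ω).toNat + 1) ω = j := by
  rw [succAtVisit]
  split_ifs with h <;> simp [h]

theorem finite_visits_or_infinite_visits_of_frequently {j : S}
    (h : ∃ᶠ n in atTop, succAtVisit X i n ω = some j ∨ visitTime X i n ω = ⊤) :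
    {t | X t ω = i}.Finite ∨ {t | X t ω = j}.Infinite := by
  refine or_iff_not_imp_left.2 fun hinf => ?_
  have hτ : ∀ n, visitTime X i n ω = Nat.nth (fun t => X t ω = i) n := fun n => by
    rw [visitTime_eq_ite, if_pos fun hf => absurd hf hinf]
  have hj : {n | X (Nat.nth (fun t => X t ω = i) n + 1) ω = j}.Infinite := by
    refine Nat.frequently_atTop_iff_infinite.1 (h.mono fun n hn => ?_)
    simpa [succAtVisit_eq_some_iff, hτ] using hn
  refine (hj.image ((add_left_injective 1).comp (Nat.nth_injective hinf)).injOn).mono ?_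
  rintro _ ⟨n, hn, rfl⟩
  exact hn

end Visits

section NatFiltration

variable {Ω S : Type*} [MeasurableSpace S] {X : ℕ → Ω → S} {i : S}

theorem measurable_natFiltration {t k : ℕ} (ht : t ≤ k) : Measurable[natFiltration X k] (X t) :=
  measurable_iff_comap_le.2 <|
    le_iSup₂ (f := fun t (_ : t ≤ k) => MeasurableSpace.comap (X t) inferInstance) t ht

variable [MeasurableSingletonClass S]

theorem measurable_count_natFiltration {t k : ℕ} (ht : t ≤ k + 1) :
    Measurable[natFiltration X k] fun ω => Nat.count (fun s => X s ω = i) t := by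
  simp_rw [Nat.count_eq_card_filter_range, Finset.card_filter]
  refine Finset.measurable_sum _ fun s hs => Measurable.ite ?_ measurable_const measurable_const
  have hsk : s ≤ k := by grind
  exact measurable_natFiltration hsk (measurableSet_singleton i)

theorem measurableSet_natFiltration_visitTime_le (n k : ℕ) :
    MeasurableSet[natFiltration X k] {ω | visitTime X i n ω ≤ k} := by
  simp_rw [visitTime_le_coe_iff]
  exact measurable_count_natFiltration le_rfl measurableSet_Ioi

theorem measurableSet_natFiltration_visitTime_eq {n t k : ℕ} (ht : t ≤ k) :
    MeasurableSet[natFiltration X k] {ω | visitTime X i n ω = t} := by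
  simp_rw [visitTime_eq_coe_iff, Set.ofPred_and]
  exact (measurable_natFiltration ht (measurableSet_singleton i)).inter
    (measurable_count_natFiltration (by omega) (measurableSet_singleton n))

end NatFiltration

section StoppedSA

variable {Ω : Type*} {ℱ : ℕ → MeasurableSpace Ω} {τ σ : Ω → ℕ∞}

theorem stoppedSA_mono (hσ : ∀ k : ℕ, MeasurableSet[ℱ k] {ω | σ ω ≤ k}) (hτσ : τ ≤ σ) :
    stoppedSA ℱ τ ≤ stoppedSA ℱ σ := by
  refine MeasurableSpace.generateFrom_le fun B hB =>
    MeasurableSpace.measurableSet_generateFrom fun k => ?_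
  have hB_eq : B ∩ {ω | σ ω ≤ k} = B ∩ {ω | τ ω ≤ k} ∩ {ω | σ ω ≤ k} := by
    ext ω
    simp only [Set.mem_inter_iff, Set.mem_ofPred_eq]
    exact ⟨fun h => ⟨⟨h.1, (hτσ ω).trans h.2⟩, h.2⟩, fun h => ⟨h.1.1, h.2⟩⟩
  rw [hB_eq]
  exact (hB k).inter (hσ k)

theorem measurableSet_stoppedSA_eq_top : MeasurableSet[stoppedSA ℱ τ] {ω | τ ω = ⊤} :=
  MeasurableSpace.measurableSet_generateFrom fun k => by
    convert @MeasurableSet.empty _ (ℱ k)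
    ext ω
    simp only [Set.mem_inter_iff, Set.mem_ofPred_eq, Set.mem_empty_iff_false, iff_false, not_and]
    rintro hτ
    simp [hτ]

end StoppedSA

section StoppedAtVisits

variable {Ω S : Type*} [MeasurableSpace S] [MeasurableSingletonClass S] {X : ℕ → Ω → S} {i : S}

theorem stoppedSA_visitTime_mono {m n : ℕ} (hmn : m ≤ n) :
    stoppedSA (natFiltration X) (visitTime X i m) ≤
      stoppedSA (natFiltration X) (visitTime X i n) :=
  stoppedSA_mono (measurableSet_natFiltration_visitTime_le n) (visitTime_mono hmn)

theorem measurableSet_stoppedSA_succAtVisit (j : S) (n : ℕ) :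
    MeasurableSet[stoppedSA (natFiltration X) (visitTime X i (n + 1))]
      {ω | succAtVisit X i n ω = some j} := by
  refine MeasurableSpace.measurableSet_generateFrom fun k => ?_
  have h_eq : {ω | succAtVisit X i n ω = some j} ∩ {ω | visitTime X i (n + 1) ω ≤ k} =
      ⋃ t < k, {ω | visitTime X i n ω = t} ∩ {ω | X (t + 1) ω = j} ∩
        {ω | visitTime X i (n + 1) ω ≤ k} := by
    ext ω
    simp only [Set.mem_inter_iff, Set.mem_iUnion, Set.mem_ofPred_eq, succAtVisit_eq_some_iff,
      exists_prop]
    constructor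
    · rintro ⟨⟨hne, hXj⟩, hk⟩
      obtain ⟨t, ht⟩ := ENat.ne_top_iff_exists.1 hne
      rw [← ht, ENat.toNat_natCast] at hXj
      exact ⟨t, lt_of_visitTime_eq_of_visitTime_succ_le ht.symm hk, ⟨ht.symm, hXj⟩, hk⟩
    · rintro ⟨t, -, ⟨ht, hXj⟩, hk⟩
      simp [ht, hXj, hk]
  rw [h_eq]
  refine MeasurableSet.iUnion fun t => MeasurableSet.iUnion fun htk => ?_
  exact ((measurableSet_natFiltration_visitTime_eq htk.le).inter
    (measurable_natFiltration htk (measurableSet_singleton j))).inter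
    (measurableSet_natFiltration_visitTime_le (n + 1) k)

end StoppedAtVisits

theorem condExp_indicator_union_ae_eq {Ω : Type*} {m mΩ : MeasurableSpace Ω} {μ : Measure Ω}
    [IsFiniteMeasure μ] (hm : m ≤ mΩ) {B T : Set Ω} (hB : MeasurableSet B)
    (hT : MeasurableSet[m] T) (hBT : Disjoint B T) :
    ∀ᵐ ω ∂μ, μ[(B ∪ T).indicator (1 : Ω → ℝ) | m] ω =
      if ω ∈ T then 1 else μ[B.indicator (1 : Ω → ℝ) | m] ω := by
  have hB_int : Integrable (B.indicator (1 : Ω → ℝ)) μ := (integrable_const 1).indicator hB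
  have hT_int : Integrable (T.indicator (1 : Ω → ℝ)) μ := (integrable_const 1).indicator (hm T hT)
  have h_split : μ[(B ∪ T).indicator (1 : Ω → ℝ) | m] =ᵐ[μ]
      μ[B.indicator 1 | m] + T.indicator 1 := by
    have h_union : (B ∪ T).indicator (1 : Ω → ℝ) = B.indicator 1 + T.indicator 1 :=
      Set.indicator_union_of_disjoint hBT 1
    rw [h_union]
    refine (condExp_add hB_int hT_int m).trans ?_
    rw [condExp_of_stronglyMeasurable hm (stronglyMeasurable_one.indicator hT) hT_int]
  have h_off_T : μ[B.indicator (1 : Ω → ℝ) | m] =ᵐ[μ] Tᶜ.indicator (μ[B.indicator 1 | m]) := by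
    have hB_sub : Tᶜ.indicator (B.indicator (1 : Ω → ℝ)) = B.indicator 1 := by
      rw [Set.indicator_indicator, Set.inter_eq_right.2 hBT.subset_compl_right]
    have := condExp_indicator (m := m) (μ := μ) hB_int hT.compl
    rwa [hB_sub] at this
  filter_upwards [h_split, h_off_T] with ω h_split h_off_T
  split_ifs with hω
  · rw [h_split, Pi.add_apply, h_off_T, Set.indicator_of_notMem (not_not.2 hω),
      Set.indicator_of_mem hω, zero_add, Pi.one_apply]
  · rw [h_split, Pi.add_apply, Set.indicator_of_notMem hω, add_zero]

theorem frequently_of_tendsto_sum_of_eventually_eq_zero {f : ℕ → ℝ} {p : ℕ → Prop}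
    (hf : Tendsto (fun N => ∑ n ∈ Finset.range N, f n) atTop atTop)
    (h0 : ∀ᶠ n in atTop, ¬ p n → f n = 0) : ∃ᶠ n in atTop, p n := by
  intro hp
  obtain ⟨N, hN⟩ := eventually_atTop.1 (h0.and hp)
  have hsum : Summable f := summable_of_ne_finset_zero (s := Finset.range N) fun n hn => by
    obtain ⟨hf0, hpn⟩ := hN n (by simpa using hn)
    exact hf0 hpn
  exact not_tendsto_atTop_of_tendsto_nhds hsum.hasSum.tendsto_sum_nat hf

section Main

variable {Ω S : Type*} [MeasurableSpace S] [MeasurableSingletonClass S] [mΩ : MeasurableSpace Ω]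
  {P : Measure Ω} {X : ℕ → Ω → S} {i j : S}

theorem ae_frequently_succAtVisit_or_visitTime_eq_top_of_stoppedSA_le [IsFiniteMeasure P]
    (hG : ∀ n, stoppedSA (natFiltration X) (visitTime X i n) ≤ mΩ)
    (h : ∀ᵐ ω ∂P, Tendsto (fun N => ∑ n ∈ Finset.range N, condProbNextAtVisit P X i j n ω)
      atTop atTop) :
    ∀ᵐ ω ∂P, ∃ᶠ n in atTop, succAtVisit X i n ω = some j ∨ visitTime X i n ω = ⊤ := by
  let 𝒢 : Filtration ℕ mΩ :=
    ⟨fun n => stoppedSA (natFiltration X) (visitTime X i n),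
      fun _ _ => stoppedSA_visitTime_mono, hG⟩
  let s : ℕ → Set Ω
    | 0 => ∅
    | n + 1 => {ω | succAtVisit X i n ω = some j} ∪ {ω | visitTime X i n ω = ⊤}
  have hs : ∀ n, MeasurableSet[𝒢 n] (s n)
    | 0 => @MeasurableSet.empty _ (𝒢 0)
    | n + 1 => (measurableSet_stoppedSA_succAtVisit j n).union
        (stoppedSA_visitTime_mono n.le_succ _ measurableSet_stoppedSA_eq_top)
  have h_summand : ∀ᵐ ω ∂P, ∀ n,
      P[(s (n + 1)).indicator 1 | 𝒢 n] ω = condProbNextAtVisit P X i j n ω :=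
    ae_all_iff.2 fun n => (condExp_indicator_union_ae_eq (μ := P) (hG n)
      (hG (n + 1) _ (measurableSet_stoppedSA_succAtVisit j n)) measurableSet_stoppedSA_eq_top
      (Set.disjoint_left.2 fun _ hA hT => (succAtVisit_eq_some_iff.1 hA).1 hT)).mono
      fun ω hω => by
        rw [hω, condProbNextAtVisit]
        by_cases hτ : visitTime X i n ω = ⊤ <;> simp [hτ, Pi.one_def]
  filter_upwards [ae_mem_limsup_atTop_iff P hs, h, h_summand] with ω h_limsup hω h_summand
  have h_mem : ω ∈ limsup s atTop := h_limsup.2 (by simpa only [h_summand] using hω)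
  rwa [← limsup_nat_add s 1, mem_limsup_iff_frequently_mem] at h_mem

theorem ae_frequently_visitTime_eq_top_of_not_stoppedSA_le {N : ℕ}
    (hN : ¬ stoppedSA (natFiltration X) (visitTime X i N) ≤ mΩ)
    (h : ∀ᵐ ω ∂P, Tendsto (fun N => ∑ n ∈ Finset.range N, condProbNextAtVisit P X i j n ω)
      atTop atTop) :
    ∀ᵐ ω ∂P, ∃ᶠ n in atTop, visitTime X i n ω = ⊤ := by
  filter_upwards [h] with ω hω
  refine frequently_of_tendsto_sum_of_eventually_eq_zero hω
    (eventually_atTop.2 ⟨N, fun n hn hτ => ?_⟩)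
  have h_not_le : ¬ stoppedSA (natFiltration X) (visitTime X i n) ≤ mΩ :=
    fun hle => hN ((stoppedSA_visitTime_mono hn).trans hle)
  simp only [condProbNextAtVisit, if_neg hτ, condExp_of_not_le h_not_le, Pi.zero_apply]

end Main

theorem finite_visits_or_infinite_visits_of_ae_tendsto_atTop_general
    {S : Type*} [MeasurableSpace S] [MeasurableSingletonClass S]
    {Ω : Type*} [MeasurableSpace Ω] (P : Measure Ω) [IsProbabilityMeasure P]
    (X : ℕ → Ω → S)
    (i j : S)
    (h : ∀ᵐ ω ∂P, Tendsto
      (fun N => ∑ n ∈ Finset.range N,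
        (if visitTime X i n ω = ⊤ then (1 : ℝ)
         else (P[Set.indicator {ω' | succAtVisit X i n ω' = some j}
            (fun _ => (1 : ℝ)) |
            stoppedSA (natFiltration X) (visitTime X i n)]) ω))
      atTop atTop) :
    P ({ω | {n : ℕ | X n ω = i}.Finite} ∪ {ω | {n : ℕ | X n ω = j}.Infinite}) = 1 := by
  have h_freq : ∀ᵐ ω ∂P, ∃ᶠ n in atTop, succAtVisit X i n ω = some j ∨ visitTime X i n ω = ⊤ := by
    by_cases hG : ∀ n, stoppedSA (natFiltration X) (visitTime X i n) ≤ ‹MeasurableSpace Ω›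
    · exact ae_frequently_succAtVisit_or_visitTime_eq_top_of_stoppedSA_le hG h
    · obtain ⟨N, hN⟩ := not_forall.1 hG
      filter_upwards [ae_frequently_visitTime_eq_top_of_not_stoppedSA_le hN h] with ω hω
      exact hω.mono fun _ => Or.inr
  have h_ae : ({ω | {n : ℕ | X n ω = i}.Finite} ∪ {ω | {n : ℕ | X n ω = j}.Infinite} : Set Ω)
      =ᵐ[P] (Set.univ : Set Ω) :=
    ae_eq_univ.2 (h_freq.mono fun _ => finite_visits_or_infinite_visits_of_frequently)
  rw [measure_congr h_ae, measure_univ]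

theorem finite_visits_or_infinite_visits_of_ae_tendsto_atTop
    {S : Type*} [Countable S] [MeasurableSpace S] [MeasurableSingletonClass S]
    {Ω : Type*} [MeasurableSpace Ω] (P : Measure Ω) [IsProbabilityMeasure P]
    (x0 : S) (X : ℕ → Ω → S)
    (hX : ∀ n, Measurable (X n)) (hX0 : ∀ ω, X 0 ω = x0)
    (i j : S)
    (h : ∀ᵐ ω ∂P, Tendsto
      (fun N => ∑ n ∈ Finset.range N,
        (if visitTime X i n ω = ⊤ then (1 : ℝ)
         else (P[Set.indicator {ω' | succAtVisit X i n ω' = some j}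
            (fun _ => (1 : ℝ)) |
            stoppedSA (natFiltration X) (visitTime X i n)]) ω))
      atTop atTop) :
    P ({ω | {n : ℕ | X n ω = i}.Finite} ∪ {ω | {n : ℕ | X n ω = j}.Infinite}) = 1 :=
  finite_visits_or_infinite_visits_of_ae_tendsto_atTop_general P X i j h
end

section
/- Let S be a finite or countable set, x0 ∈ S, α > 0, and let q be a probability mass function on S with q(x0) > 0. Let X = (X_n)_{n≥0} be the S-valued process with X_0 = x0 whose law is determined (via the Ionescu–Tulcea theorem) by the predictive probabilities P(X_{n+1} = j | X_0 = x0, X_1,…,X_{n-1} = x, X_n = i) = (α q(j) + T_{i,j}(x0,x,i)) / (α + T_{i,·}(x0,x,i)), where T_{i,·}(z) = ∑_{j'} T_{i,j'}(z). Then X is recurrent: almost surely X_n = x0 for infinitely many n. -/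
/-!
Whatever the past, the walk currently at `i` after `n` steps has made at most `n` transitions
out of `i`, so it jumps to `x0` with probability at least `α q(x0) / (α + n)`. Chaining these
conditional bounds, the probability of avoiding `x0` at times `m + 1, …, m + L` is at most
`∏_{k < L} (1 - α q(x0) / (α + m + k))`, which tends to `0` as `L → ∞` because the harmonic
series diverges. Hence almost surely `x0` is visited after every time `m`.
-/

open MeasureTheory Filter

variable {S : Type*} [DecidableEq S]

/-- The number of transitions from `i` in the finite string `z`. -/
def transFrom (z : List S) (i : S) : ℕ :=
  (z.zip z.tail).countP (fun q => decide (q.1 = i))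

/-- One-step predictive probability of the reinforced Hoppe urn scheme: the past
path is `z` (starting at `x0`, ending at the current state), the next state is `y`. -/
noncomputable def hoppeStep (α : S → ℝ) (q : S → S → ℝ) (z : List S) (y : S) : ℝ :=
  match z.getLast? with
  | none => 0
  | some i => (α i * q i y + (transCount z i y : ℝ)) / (α i + (transFrom z i : ℝ))

/-- The probability of appending the string `x` to the past path `z`. -/
noncomputable def lawFrom (step : List S → S → ℝ) : List S → List S → ℝ
  | _, [] => 1
  | z, y :: rest => step z y * lawFrom step (z ++ [y]) rest

/-- The process law of the reinforced Hoppe urn scheme started at `x0`. -/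
noncomputable def hoppeLaw (α : S → ℝ) (q : S → S → ℝ) (x0 : S) (x : List S) : ℝ :=
  lawFrom (hoppeStep α q) [x0] x

/-- The event `{X_1 = x_1, …, X_n = x_n}` for a finite string `x = (x_1, …, x_n)`. -/
def pathEvent {Ω : Type*} (X : ℕ → Ω → S) (x : List S) : Set Ω :=
  {ω | (List.range x.length).map (fun k => X (k + 1) ω) = x}

open scoped ENNReal Topology

section LawFrom

variable {T : Type*} (step : List T → T → ℝ)

theorem lawFrom_nonneg (hstep : ∀ z y, 0 ≤ step z y) : ∀ z x : List T, 0 ≤ lawFrom step z x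
  | _, [] => zero_le_one
  | z, y :: x => mul_nonneg (hstep z y) (lawFrom_nonneg hstep (z ++ [y]) x)

theorem lawFrom_append : ∀ z a b : List T,
    lawFrom step z (a ++ b) = lawFrom step z a * lawFrom step (z ++ a) b
  | z, [], b => by simp [lawFrom]
  | z, y :: a, b => by
    simp only [List.cons_append, lawFrom, lawFrom_append (z ++ [y]) a b, List.append_assoc,
      List.nil_append, mul_assoc]

theorem tsum_ofReal_lawFrom_ofFn_le (hstep : ∀ z y, 0 ≤ step z y) (s : Set T) (b : ℕ → ℝ≥0∞)
    (hb : ∀ n z, z.length = n + 1 → ∑' y : s, ENNReal.ofReal (step z y) ≤ b n) :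
    ∀ (L n : ℕ) (z : List T), z.length = n + 1 →
      ∑' x : Fin L → s, ENNReal.ofReal (lawFrom step z (List.ofFn fun k => (x k : T)))
        ≤ ∏ k ∈ Finset.range L, b (n + k)
  | 0, n, z, _ => by
    simp [lawFrom]
  | L + 1, n, z, hz => by
    have hcons (y : s) (x : Fin L → s) :
        ENNReal.ofReal
            (lawFrom step z (List.ofFn fun k => ((Fin.cons y x : Fin (L + 1) → s) k : T)))
          = ENNReal.ofReal (step z y)
            * ENNReal.ofReal (lawFrom step (z ++ [(y : T)]) (List.ofFn fun k => (x k : T))) := by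
      rw [List.ofFn_succ]
      simp only [Fin.cons_zero, Fin.cons_succ, lawFrom]
      exact ENNReal.ofReal_mul (hstep z y)
    calc ∑' x : Fin (L + 1) → s, ENNReal.ofReal (lawFrom step z (List.ofFn fun k => (x k : T)))
        = ∑' y : s, ENNReal.ofReal (step z y) * ∑' x : Fin L → s,
            ENNReal.ofReal (lawFrom step (z ++ [(y : T)]) (List.ofFn fun k => (x k : T))) := by
          rw [← (Fin.consEquiv fun _ => s).tsum_eq, ENNReal.tsum_prod']
          simp only [Fin.consEquiv_apply, hcons, ENNReal.tsum_mul_left]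
      _ ≤ ∑' y : s, ENNReal.ofReal (step z y) * ∏ k ∈ Finset.range L, b (n + 1 + k) :=
          ENNReal.tsum_le_tsum fun y => mul_le_mul_right
            (tsum_ofReal_lawFrom_ofFn_le hstep s b hb L (n + 1) _ (by simp [hz])) _
      _ ≤ b n * ∏ k ∈ Finset.range L, b (n + 1 + k) := by
          rw [ENNReal.tsum_mul_right]
          exact mul_le_mul_left (hb n z hz) _
      _ = ∏ k ∈ Finset.range (L + 1), b (n + k) := by
          rw [Finset.prod_range_succ', mul_comm]
          simp only [add_assoc, add_comm 1, add_zero]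

end LawFrom

section PathEvent

variable {T Ω : Type*}

theorem mem_pathEvent_ofFn (X : ℕ → Ω → T) (ω : Ω) (n : ℕ) :
    ω ∈ pathEvent X (List.ofFn fun k : Fin n => X (k + 1) ω) :=
  List.ext_getElem (by simp) (by simp)

theorem measure_forall_gt_mem_le_prod [Countable T] [MeasurableSpace Ω] (P : Measure Ω)
    (X : ℕ → Ω → T) (step : List T → T → ℝ) (x0 : T)
    (hlaw : ∀ x, P (pathEvent X x) = ENNReal.ofReal (lawFrom step [x0] x))
    (hstep : ∀ z y, 0 ≤ step z y)
    (htot : ∀ z : List T, z ≠ [] → ∑' y, ENNReal.ofReal (step z y) ≤ 1)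
    (s : Set T) (b : ℕ → ℝ≥0∞)
    (hb : ∀ n z, z.length = n + 1 → ∑' y : s, ENNReal.ofReal (step z y) ≤ b n) (m L : ℕ) :
    P {ω | ∀ k, m < k → X k ω ∈ s} ≤ ∏ k ∈ Finset.range L, b (m + k) := by
  let path (p : (Fin m → (Set.univ : Set T)) × (Fin L → s)) : List T :=
    List.ofFn (fun k => (p.1 k : T)) ++ List.ofFn (fun k => (p.2 k : T))
  have hcover : {ω | ∀ k, m < k → X k ω ∈ s} ⊆ ⋃ p, pathEvent X (path p) := by
    intro ω hω
    refine Set.mem_iUnion.2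
      ⟨(fun k => ⟨X (k + 1) ω, trivial⟩, fun k => ⟨X (m + k + 1) ω, hω _ (by omega)⟩), ?_⟩
    have hpath := mem_pathEvent_ofFn X ω (m + L)
    rw [List.ofFn_add] at hpath
    simpa [path] using hpath
  have hprefix : ∑' w : Fin m → (Set.univ : Set T),
      ENNReal.ofReal (lawFrom step [x0] (List.ofFn fun k => (w k : T))) ≤ 1 := by
    have hone : ∀ n z, z.length = n + 1 →
        ∑' y : (Set.univ : Set T), ENNReal.ofReal (step z y) ≤ 1 := fun n z hz => by
      rw [tsum_univ fun y => ENNReal.ofReal (step z y)]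
      exact htot z (List.ne_nil_of_length_eq_add_one hz)
    simpa using tsum_ofReal_lawFrom_ofFn_le step hstep Set.univ 1 hone m 0 [x0] rfl
  calc P {ω | ∀ k, m < k → X k ω ∈ s}
      ≤ ∑' p, P (pathEvent X (path p)) := (measure_mono hcover).trans (measure_iUnion_le _)
    _ = ∑' w : Fin m → (Set.univ : Set T),
          ENNReal.ofReal (lawFrom step [x0] (List.ofFn fun k => (w k : T))) *
          ∑' v : Fin L → s, ENNReal.ofReal (lawFrom step ([x0] ++ List.ofFn fun k => (w k : T))
            (List.ofFn fun k => (v k : T))) := by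
        simp only [path, hlaw, lawFrom_append,
          ENNReal.ofReal_mul (lawFrom_nonneg step hstep _ _), ENNReal.tsum_prod',
          ENNReal.tsum_mul_left]
    _ ≤ ∑' w : Fin m → (Set.univ : Set T),
          ENNReal.ofReal (lawFrom step [x0] (List.ofFn fun k => (w k : T))) *
          ∏ k ∈ Finset.range L, b (m + k) := by
        gcongr with w
        exact tsum_ofReal_lawFrom_ofFn_le step hstep s b hb L m _ (by simp)
    _ ≤ ∏ k ∈ Finset.range L, b (m + k) := by
        rw [ENNReal.tsum_mul_right]
        exact mul_le_of_le_one_left' hprefix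

end PathEvent

theorem tendsto_prod_ofReal_one_sub_of_not_summable {δ : ℕ → ℝ} (hδ0 : ∀ k, 0 ≤ δ k)
    (hδ : ¬ Summable δ) :
    Tendsto (fun L => ∏ k ∈ Finset.range L, ENNReal.ofReal (1 - δ k)) atTop (𝓝 0) := by
  have hbound (L : ℕ) : ∏ k ∈ Finset.range L, ENNReal.ofReal (1 - δ k)
      ≤ ENNReal.ofReal (Real.exp (-∑ k ∈ Finset.range L, δ k)) := by
    rw [← Finset.sum_neg_distrib, Real.exp_sum,
      ENNReal.ofReal_prod_of_nonneg fun k _ => (Real.exp_pos _).le]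
    exact Finset.prod_le_prod' fun k _ => ENNReal.ofReal_le_ofReal (Real.one_sub_le_exp_neg _)
  have hexp : Tendsto (fun L => ENNReal.ofReal (Real.exp (-∑ k ∈ Finset.range L, δ k)))
      atTop (𝓝 0) := by
    have hsum := (not_summable_iff_tendsto_nat_atTop_of_nonneg hδ0).1 hδ
    simpa using ENNReal.tendsto_ofReal
      (Real.tendsto_exp_atBot.comp (tendsto_neg_atTop_atBot.comp hsum))
  exact tendsto_of_tendsto_of_tendsto_of_le_of_le tendsto_const_nhds hexp (fun _ => zero_le) hbound

theorem not_summable_div_add_natCast {a c : ℝ} (ha : 0 ≤ a) (hc : c ≠ 0) :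
    ¬ Summable fun n : ℕ => c / (a + n) := by
  intro h
  refine (Real.summable_one_div_nat_add_rpow a 1).not.2 (lt_irrefl 1) ?_
  refine (h.mul_left c⁻¹).congr fun n => ?_
  rw [abs_of_nonneg (by positivity), Real.rpow_one, add_comm, mul_div, inv_mul_cancel₀ hc]

theorem tsum_countP_eq_fst (l : List (S × S)) (i : S) :
    ∑' j, (l.countP (fun p => decide (p = (i, j))) : ℝ≥0∞)
      = l.countP (fun p => decide (p.1 = i)) := by
  induction l with
  | nil => simp
  | cons p l ih =>
    simp only [List.countP_cons, Nat.cast_add, ENNReal.tsum_add, ih]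
    congr 1
    obtain ⟨a, c⟩ := p
    by_cases ha : a = i
    · subst ha
      simp [Prod.ext_iff, eq_comm]
    · simp [Prod.ext_iff, ha]

theorem tsum_transCount (z : List S) (i : S) :
    ∑' j, (transCount z i j : ℝ≥0∞) = transFrom z i :=
  tsum_countP_eq_fst _ i

theorem transFrom_le (z : List S) (i : S) : transFrom z i ≤ z.length - 1 := by
  simpa [transFrom] using List.countP_le_length (l := z.zip z.tail)

section Hoppe

variable {α : ℝ} {q : S → ℝ}

theorem hoppeStep_nonneg (hα : 0 ≤ α) (hq0 : ∀ y, 0 ≤ q y) (z : List S) (y : S) :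
    0 ≤ hoppeStep (fun _ => α) (fun _ => q) z y := by
  unfold hoppeStep
  split
  · exact le_rfl
  · exact div_nonneg (by have := hq0 y; positivity) (by positivity)

theorem tsum_ofReal_hoppeStep (hα : 0 < α) (hq0 : ∀ y, 0 ≤ q y) (hq1 : HasSum q 1)
    {z : List S} (hz : z ≠ []) :
    ∑' y, ENNReal.ofReal (hoppeStep (fun _ => α) (fun _ => q) z y) = 1 := by
  obtain ⟨i, hi⟩ := Option.isSome_iff_exists.1 (List.getLast?_isSome.2 hz)
  have hsplit (y : S) : ENNReal.ofReal (hoppeStep (fun _ => α) (fun _ => q) z y)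
      = (ENNReal.ofReal (α * q y) + transCount z i y) / ENNReal.ofReal (α + transFrom z i) := by
    rw [hoppeStep, hi, ENNReal.ofReal_div_of_pos (by positivity),
      ENNReal.ofReal_add (mul_nonneg hα.le (hq0 y)) (Nat.cast_nonneg _), ENNReal.ofReal_natCast]
  simp only [hsplit, div_eq_mul_inv, ENNReal.tsum_mul_right, ENNReal.tsum_add, tsum_transCount,
    ← ENNReal.ofReal_tsum_of_nonneg (fun y => mul_nonneg hα.le (hq0 y)) (hq1.summable.mul_left α),
    (hq1.mul_left α).tsum_eq, mul_one]
  rw [ENNReal.ofReal_add hα.le (Nat.cast_nonneg _), ENNReal.ofReal_natCast]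
  exact ENNReal.mul_inv_cancel (by simp [hα]) (by finiteness)

theorem div_le_hoppeStep (hα : 0 < α) (hq0 : ∀ y, 0 ≤ q y) {n : ℕ} {z : List S}
    (hz : z.length = n + 1) (y : S) :
    α * q y / (α + n) ≤ hoppeStep (fun _ => α) (fun _ => q) z y := by
  obtain ⟨i, hi⟩ := Option.isSome_iff_exists.1
    (List.getLast?_isSome.2 (List.ne_nil_of_length_eq_add_one hz))
  have htrans : (transFrom z i : ℝ) ≤ n := by
    exact_mod_cast (transFrom_le z i).trans_eq (by omega)
  rw [hoppeStep, hi]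
  have := hq0 y
  exact div_le_div₀ (by positivity) (le_add_of_nonneg_right (Nat.cast_nonneg _)) (by positivity)
    (by linarith)

theorem tsum_ofReal_hoppeStep_compl_le (hα : 0 < α) (hq0 : ∀ y, 0 ≤ q y) (hq1 : HasSum q 1)
    (x0 : S) {n : ℕ} {z : List S} (hz : z.length = n + 1) :
    ∑' y : ({x0}ᶜ : Set S), ENNReal.ofReal (hoppeStep (fun _ => α) (fun _ => q) z y)
      ≤ ENNReal.ofReal (1 - α * q x0 / (α + n)) := by
  have htotal := ENNReal.sum_add_tsum_compl {x0}
    fun y => ENNReal.ofReal (hoppeStep (fun _ => α) (fun _ => q) z y)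
  rw [Finset.sum_singleton, Finset.coe_singleton,
    tsum_ofReal_hoppeStep hα hq0 hq1 (List.ne_nil_of_length_eq_add_one hz)] at htotal
  calc ∑' y : ({x0}ᶜ : Set S), ENNReal.ofReal (hoppeStep (fun _ => α) (fun _ => q) z y)
      = 1 - ENNReal.ofReal (hoppeStep (fun _ => α) (fun _ => q) z x0) :=
        (ENNReal.sub_eq_of_eq_add_rev ENNReal.ofReal_ne_top htotal.symm).symm
    _ ≤ 1 - ENNReal.ofReal (α * q x0 / (α + n)) :=
        tsub_le_tsub_left (ENNReal.ofReal_le_ofReal (div_le_hoppeStep hα hq0 hz x0)) 1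
    _ = ENNReal.ofReal (1 - α * q x0 / (α + n)) := by
        rw [ENNReal.ofReal_sub _ (by have := hq0 x0; positivity), ENNReal.ofReal_one]

end Hoppe

theorem hoppe_common_weights_recurrent_general [Countable S]
    (α : ℝ) (hα : 0 < α)
    (q : S → ℝ) (hq0 : ∀ j, 0 ≤ q j) (hq1 : HasSum q 1)
    (x0 : S) (hqx0 : 0 < q x0)
    {Ω : Type*} [MeasurableSpace Ω] (P : Measure Ω)
    (X : ℕ → Ω → S)
    (hlaw : ∀ x : List S,
      P (pathEvent X x) =
        ENNReal.ofReal (hoppeLaw (fun _ => α) (fun _ => q) x0 x)) :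
    ∀ᵐ ω ∂P, {n : ℕ | X n ω = x0}.Infinite := by
  have hreturn (m : ℕ) : ∀ᵐ ω ∂P, ∃ k > m, X k ω = x0 := by
    have hdiv : ¬ Summable fun k => α * q x0 / (α + (m + k : ℕ)) := fun h =>
      not_summable_div_add_natCast hα.le (mul_pos hα hqx0).ne'
        ((summable_nat_add_iff m).1 (by simpa only [Nat.add_comm m] using h))
    have hbound (L : ℕ) : P {ω | ∀ k, m < k → X k ω ∈ ({x0}ᶜ : Set S)}
        ≤ ∏ k ∈ Finset.range L, ENNReal.ofReal (1 - α * q x0 / (α + (m + k : ℕ))) :=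
      measure_forall_gt_mem_le_prod P X _ x0 hlaw (hoppeStep_nonneg hα.le hq0)
        (fun _ hz => (tsum_ofReal_hoppeStep hα hq0 hq1 hz).le) _ _
        (fun _ _ hz => tsum_ofReal_hoppeStep_compl_le hα hq0 hq1 x0 hz) m L
    have hnull := ge_of_tendsto' (tendsto_prod_ofReal_one_sub_of_not_summable
      (fun k => by positivity) hdiv) hbound
    rw [ae_iff]
    simpa using hnull
  filter_upwards [ae_all_iff.2 hreturn] with ω hω
  exact Nat.frequently_atTop_iff_infinite.1 (frequently_atTop'.2 hω)

theorem hoppe_common_weights_recurrent [Countable S]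
    (α : ℝ) (hα : 0 < α)
    (q : S → ℝ) (hq0 : ∀ j, 0 ≤ q j) (hq1 : HasSum q 1)
    (x0 : S) (hqx0 : 0 < q x0)
    [MeasurableSpace S] [MeasurableSingletonClass S]
    {Ω : Type*} [MeasurableSpace Ω] (P : Measure Ω) [IsProbabilityMeasure P]
    (X : ℕ → Ω → S) (hX : ∀ n, Measurable (X n)) (hX0 : ∀ ω, X 0 ω = x0)
    (hlaw : ∀ x : List S,
      P (pathEvent X x) =
        ENNReal.ofReal (hoppeLaw (fun _ => α) (fun _ => q) x0 x)) :
    ∀ᵐ ω ∂P, {n : ℕ | X n ω = x0}.Infinite :=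
  hoppe_common_weights_recurrent_general α hα q hq0 hq1 x0 hqx0 P X hlaw
end
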